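/- arXiv:1102.2124 — 9 statements merged into one kernel-verified Lean document; each statement's English description precedes it below -/
import Mathlib

section
/- For every magma (G,∘) and every integer n ≥ 2, the associative spectrum satisfies s_G(n) ≤ s_G(1)·s_G(n−1) + s_G(2)·s_G(n−2) + ⋯ + s_G(n−1)·s_G(1) = Σ_{k=1}^{n−1} s_G(k)·s_G(n−k). (Paper's Proposition 2.3.) -/
/-- A bracketing of size `n`: a full binary tree with `n` leaves. -/
inductive Bracketing : ℕ → Type
  | leaf : Bracketing 1
  | node : {k l : ℕ} → Bracketing k → Bracketing l → Bracketing (k + l)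

/-- The `n`-ary regular operation induced by a bracketing on a magma `(G, op)`. -/
def Bracketing.eval {G : Type*} (op : G → G → G) : {n : ℕ} → Bracketing n → (Fin n → G) → G
  | _, .leaf, v => v 0
  | _, .node P Q, v =>
      op (Bracketing.eval op P (fun i => v (Fin.castAdd _ i)))
         (Bracketing.eval op Q (fun i => v (Fin.natAdd _ i)))

/-- The associative spectrum: the number of distinct `n`-ary regular operations. -/
noncomputable def assocSpectrum {G : Type*} (op : G → G → G) (n : ℕ) : ℕ :=
  Nat.card {f : (Fin n → G) → G // ∃ B : Bracketing n, f = Bracketing.eval op B}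

/-- The depth of the `i`-th leaf of a bracketing. -/
def Bracketing.depth : {n : ℕ} → Bracketing n → Fin n → ℕ
  | _, .leaf, _ => 0
  | _, .node (k := k) P Q, i =>
      if h : (i : ℕ) < k then Bracketing.depth P ⟨i, h⟩ + 1
      else Bracketing.depth Q ⟨(i : ℕ) - k, by have := i.isLt; omega⟩ + 1

/-- The right depth of the `i`-th leaf of a bracketing. -/
def Bracketing.rdepth : {n : ℕ} → Bracketing n → Fin n → ℕ
  | _, .leaf, _ => 0
  | _, .node (k := k) P Q, i =>
      if h : (i : ℕ) < k then Bracketing.rdepth P ⟨i, h⟩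
      else Bracketing.rdepth Q ⟨(i : ℕ) - k, by have := i.isLt; omega⟩ + 1

/-- The left depth of the `i`-th leaf of a bracketing. -/
def Bracketing.ldepth : {n : ℕ} → Bracketing n → Fin n → ℕ
  | _, .leaf, _ => 0
  | _, .node (k := k) P Q, i =>
      if h : (i : ℕ) < k then Bracketing.ldepth P ⟨i, h⟩ + 1
      else Bracketing.ldepth Q ⟨(i : ℕ) - k, by have := i.isLt; omega⟩

/-- A magma operation is Catalan if distinct bracketings of equal size
    induce distinct regular operations. -/
def IsCatalanOp {G : Type*} (op : G → G → G) : Prop :=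
  ∀ (n : ℕ) (B₁ B₂ : Bracketing n), B₁ ≠ B₂ →
    Bracketing.eval op B₁ ≠ Bracketing.eval op B₂


/-! The root of a bracketing of size `n ≥ 2` splits it into bracketings of sizes `k` and `n - k`
with `1 ≤ k < n`, so every `n`-ary regular operation is `op (f (x₁, …, xₖ)) (g (xₖ₊₁, …, xₙ))`
for a `k`-ary regular `f` and an `(n - k)`-ary regular `g`; counting the pairs `(f, g)` gives the
bound. Since `Nat.card` of an infinite type is `0`, the count also needs every arity to have only
finitely many regular operations, which follows from the same splitting by strong induction. -/

theorem Set.ncard_image2_le {α β γ : Type*} (f : α → β → γ) {s : Set α} {t : Set β}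
    (hs : s.Finite) (ht : t.Finite) : (Set.image2 f s t).ncard ≤ s.ncard * t.ncard := by
  rw [← Set.image_uncurry_prod, ← Set.ncard_prod]
  exact Set.ncard_image_le (hs.prod ht)

namespace Bracketing

theorem one_le_size : ∀ {n : ℕ}, Bracketing n → 1 ≤ n
  | _, .leaf => le_rfl
  | _, .node P _ => P.one_le_size.trans (Nat.le_add_right _ _)

instance : IsEmpty (Bracketing 0) :=
  ⟨fun B => absurd B.one_le_size (by norm_num)⟩

instance : Subsingleton (Bracketing 1) := by
  suffices h : ∀ {n} (B : Bracketing n) (h : n = 1), h ▸ B = leaf from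
    ⟨fun B C => (h B rfl).trans (h C rfl).symm⟩
  intro n B
  cases B with
  | leaf => exact fun _ => rfl
  | node P Q => intro h; have := P.one_le_size; have := Q.one_le_size; omega

theorem eval_cast {G : Type*} (op : G → G → G) {a b : ℕ} (h : a = b) (B : Bracketing a) :
    eval op (h ▸ B) = fun v => eval op B (fun i => v (Fin.cast h i)) := by
  subst h; rfl

end Bracketing

section RegularOps

variable {G : Type*} (op : G → G → G)

def regularOps (n : ℕ) : Set ((Fin n → G) → G) :=
  Set.range (Bracketing.eval op (n := n))

theorem assocSpectrum_eq_ncard_regularOps (n : ℕ) :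
    assocSpectrum op n = (regularOps op n).ncard :=
  Nat.card_congr <| Equiv.subtypeEquivRight fun _ => by
    simp only [regularOps, Set.mem_range, eq_comm]

def splitOp {n k : ℕ} (hk : k ≤ n) (f : (Fin k → G) → G) (g : (Fin (n - k) → G) → G)
    (v : Fin n → G) : G :=
  op (f fun i => v (Fin.castLE hk i)) (g fun j => v ⟨k + j, by omega⟩)

def splitOps (n : ℕ) (k : Finset.Ico 1 n) : Set ((Fin n → G) → G) :=
  Set.image2 (splitOp op (Finset.mem_Ico.1 k.2).2.le) (regularOps op k) (regularOps op (n - k))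

theorem regularOps_subset_iUnion_splitOps {n : ℕ} (hn : 2 ≤ n) :
    regularOps op n ⊆ ⋃ k, splitOps op n k := by
  rintro _ ⟨B, rfl⟩
  cases B with
  | leaf => omega
  | @node k l P Q =>
    have hk : k ∈ Finset.Ico 1 (k + l) :=
      Finset.mem_Ico.2 ⟨P.one_le_size, by have := Q.one_le_size; omega⟩
    have hl : l = k + l - k := (Nat.add_sub_cancel_left k l).symm
    refine Set.mem_iUnion.2 ⟨⟨k, hk⟩, _, ⟨P, rfl⟩, _, ⟨hl ▸ Q, rfl⟩, ?_⟩
    rw [Bracketing.eval_cast]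
    rfl

theorem regularOps_finite (n : ℕ) : (regularOps op n).Finite := by
  induction n using Nat.strong_induction_on with
  | _ n ih =>
    obtain hn | hn := lt_or_ge n 2
    · have : Finite (Bracketing n) := by interval_cases n <;> infer_instance
      exact Set.finite_range _
    refine (Set.finite_iUnion fun k => ?_).subset (regularOps_subset_iUnion_splitOps op hn)
    obtain ⟨hk, hkn⟩ := Finset.mem_Ico.1 k.2
    exact (ih k hkn).image2 _ (ih (n - k) (by omega))

theorem ncard_splitOps_le (n : ℕ) (k : Finset.Ico 1 n) :
    (splitOps op n k).ncard ≤ (regularOps op k).ncard * (regularOps op (n - k)).ncard :=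
  Set.ncard_image2_le _ (regularOps_finite op _) (regularOps_finite op _)

end RegularOps

/-- Paper's Proposition 2.3: `s(n) ≤ ∑_{k=1}^{n-1} s(k)·s(n-k)` for `n ≥ 2`. -/
theorem stmt1 {G : Type*} (op : G → G → G) (n : ℕ) (hn : 2 ≤ n) :
    assocSpectrum op n ≤ ∑ k ∈ Finset.Ico 1 n, assocSpectrum op k * assocSpectrum op (n - k) := by
  simp only [assocSpectrum_eq_ncard_regularOps]
  calc (regularOps op n).ncard
      ≤ (⋃ k, splitOps op n k).ncard :=
        Set.ncard_le_ncard (regularOps_subset_iUnion_splitOps op hn)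
          (Set.finite_iUnion fun _ => (regularOps_finite op _).image2 _ (regularOps_finite op _))
    _ ≤ ∑ k, (splitOps op n k).ncard := Set.ncard_iUnion_le_of_fintype _
    _ ≤ ∑ k : Finset.Ico 1 n, (regularOps op k).ncard * (regularOps op (n - k)).ncard :=
        Finset.sum_le_sum fun k _ => ncard_splitOps_le op n k
    _ = _ := Finset.sum_coe_sort _ fun k => (regularOps op k).ncard * (regularOps op (n - k)).ncard
end

section
/- Bracketings are uniquely determined by their depth sequences: if two bracketings of the same size n have the same depth sequence (d_1,…,d_n), then they are equal. (Paper's Proposition 2.7.) -/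
lemma Bracketing.pos : ∀ {n : ℕ}, Bracketing n → 1 ≤ n
  | _, .leaf => le_refl 1
  | _, .node P Q => le_trans P.pos (Nat.le_add_right _ _)

lemma Bracketing.kraft : ∀ {n : ℕ} (B : Bracketing n),
    ∑ i : Fin n, ((2:ℚ)⁻¹) ^ (B.depth i) = 1
  | _, .leaf => by simp [Bracketing.depth]
  | _, .node (k := k) (l := l) P Q => by
    rw [Fin.sum_univ_add]
    have h1 : ∀ i : Fin k, ((2:ℚ)⁻¹) ^ ((Bracketing.node P Q).depth (Fin.castAdd l i))
        = (2:ℚ)⁻¹ * ((2:ℚ)⁻¹) ^ (P.depth i) := by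
      intro i
      simp only [Bracketing.depth, Fin.coe_castAdd, i.isLt, dif_pos]
      rw [pow_succ]; ring
    have h2 : ∀ i : Fin l, ((2:ℚ)⁻¹) ^ ((Bracketing.node P Q).depth (Fin.natAdd k i))
        = (2:ℚ)⁻¹ * ((2:ℚ)⁻¹) ^ (Q.depth i) := by
      intro i
      have hk : ¬ ((Fin.natAdd k i : Fin (k+l)) : ℕ) < k := by simp
      simp only [Bracketing.depth, dif_neg hk]
      have : ((Fin.natAdd k i : Fin (k+l)) : ℕ) - k = (i : ℕ) := by simp
      rw [show (⟨((Fin.natAdd k i : Fin (k+l)) : ℕ) - k, by have := (Fin.natAdd k i).isLt; omega⟩ : Fin l) = i by ext; simp]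
      rw [pow_succ]; ring
    simp only [h1, h2, ← Finset.mul_sum, Bracketing.kraft P, Bracketing.kraft Q]
    norm_num

lemma Bracketing.half {k l : ℕ} (P : Bracketing k) (Q : Bracketing l) :
    ∑ i : Fin (k + l), (if (i : ℕ) < k then ((2:ℚ)⁻¹) ^ ((Bracketing.node P Q).depth i) else 0)
      = (2:ℚ)⁻¹ := by
  rw [Fin.sum_univ_add]
  have h1 : ∀ i : Fin k,
      (if ((Fin.castAdd l i : Fin (k+l)) : ℕ) < k then ((2:ℚ)⁻¹) ^ ((Bracketing.node P Q).depth (Fin.castAdd l i)) else 0)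
      = (2:ℚ)⁻¹ * ((2:ℚ)⁻¹) ^ (P.depth i) := by
    intro i
    rw [if_pos (by simpa using i.isLt)]
    simp only [Bracketing.depth, Fin.coe_castAdd, i.isLt, dif_pos]
    rw [pow_succ]; ring
  have h2 : ∀ i : Fin l,
      (if ((Fin.natAdd k i : Fin (k+l)) : ℕ) < k then ((2:ℚ)⁻¹) ^ ((Bracketing.node P Q).depth (Fin.natAdd k i)) else 0)
      = 0 := by
    intro i; rw [if_neg (by simp)]
  simp only [h1, h2, ← Finset.mul_sum, Bracketing.kraft P, Finset.sum_const_zero]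
  norm_num

lemma split_unique {n : ℕ} (w : Fin n → ℚ) (hw : ∀ i, 0 < w i)
    {a b : ℕ} (hab : a < b) (hb : b ≤ n)
    (ha' : ∑ i : Fin n, (if (i:ℕ) < a then w i else 0) = (2:ℚ)⁻¹)
    (hb' : ∑ i : Fin n, (if (i:ℕ) < b then w i else 0) = (2:ℚ)⁻¹) : False := by
  have hlt : ∑ i : Fin n, (if (i:ℕ) < a then w i else 0)
      < ∑ i : Fin n, (if (i:ℕ) < b then w i else 0) := by
    apply Finset.sum_lt_sum
    · intro i _
      by_cases h : (i:ℕ) < a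
      · rw [if_pos h, if_pos (lt_trans h hab)]
      · rw [if_neg h]
        by_cases h2 : (i:ℕ) < b
        · rw [if_pos h2]; exact le_of_lt (hw i)
        · rw [if_neg h2]
    · refine ⟨⟨a, lt_of_lt_of_le hab hb⟩, Finset.mem_univ _, ?_⟩
      simp only [lt_irrefl, if_neg, if_pos hab]
      exact hw _
  rw [ha', hb'] at hlt
  exact lt_irrefl _ hlt

lemma Bracketing.depth_inj : ∀ {n : ℕ} (B₁ : Bracketing n) {m : ℕ} (B₂ : Bracketing m)
    (hnm : n = m), (∀ i : Fin n, B₁.depth i = B₂.depth (Fin.cast hnm i)) → HEq B₁ B₂ := by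
  intro n B₁
  induction B₁ with
  | leaf =>
    intro m B₂ hnm hd
    cases B₂ with
    | leaf => exact HEq.refl _
    | node P Q => exact absurd hnm (by have := P.pos; have := Q.pos; omega)
  | node P Q ihP ihQ =>
    rename_i k l
    intro m B₂ hnm hd
    cases B₂ with
    | leaf => exact absurd hnm (by have := P.pos; have := Q.pos; omega)
    | node P' Q' =>
      rename_i k' l'
      -- show k = k'
      have hsum2 : ∑ i : Fin (k + l),
          (if (i:ℕ) < k' then ((2:ℚ)⁻¹) ^ ((Bracketing.node P Q).depth i) else 0)
          = (2:ℚ)⁻¹ := by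
        calc ∑ i : Fin (k + l),
            (if (i:ℕ) < k' then ((2:ℚ)⁻¹) ^ ((Bracketing.node P Q).depth i) else 0)
            = ∑ j : Fin (k' + l'),
            (if (j:ℕ) < k' then ((2:ℚ)⁻¹) ^ ((Bracketing.node P' Q').depth j) else 0) := by
              rw [← Fin.sum_congr' _ hnm]
              exact Finset.sum_congr rfl fun i _ => by
                simp only [Fin.coe_cast, hd i]
          _ = (2:ℚ)⁻¹ := Bracketing.half P' Q'
      have hsum1 := Bracketing.half P Q
      have hkk : k = k' := by
        by_contra hne
        rcases lt_or_gt_of_ne hne with hlt | hlt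
        · exact split_unique (fun i => ((2:ℚ)⁻¹) ^ ((Bracketing.node P Q).depth i))
            (fun i => by positivity) hlt (by have := Q'.pos; omega) hsum1 hsum2
        · exact split_unique (fun i => ((2:ℚ)⁻¹) ^ ((Bracketing.node P Q).depth i))
            (fun i => by positivity) hlt (by have := Q.pos; omega) hsum2 hsum1
      subst hkk
      have hll : l = l' := by omega
      subst hll
      have hP : HEq P P' := by
        apply ihP P' rfl
        intro i
        have h2 := hd (Fin.castAdd l i)
        simp only [Bracketing.depth, Fin.coe_cast, Fin.coe_castAdd, i.isLt, dif_pos,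
          Fin.eta] at h2
        show P.depth i = P'.depth i
        omega
      have hQ : HEq Q Q' := by
        apply ihQ Q' rfl
        intro i
        have h2 := hd (Fin.natAdd k i)
        have hnl : ¬ (k + (i : ℕ) < k) := by omega
        simp only [Bracketing.depth, Fin.coe_cast, Fin.coe_natAdd, dif_neg hnl,
          Nat.add_sub_cancel_left, Fin.eta] at h2
        show Q.depth i = Q'.depth i
        omega
      rw [eq_of_heq hP, eq_of_heq hQ]

/-- Paper's Proposition 2.7: bracketings are uniquely determined by their depth sequences. -/
theorem stmt4 {n : ℕ} (B₁ B₂ : Bracketing n) (h : B₁.depth = B₂.depth) : B₁ = B₂ := by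
  apply eq_of_heq
  apply Bracketing.depth_inj B₁ B₂ rfl
  intro i
  rw [h]
  rfl
end

section
/- Bracketings are uniquely determined by their right depth sequences: if two bracketings of the same size n have the same right depth sequence (d_1,…,d_n), then they are equal. (Paper's Proposition 2.8.) -/
/-!
Only the leftmost leaf of a bracketing has right depth `0`. Hence in `node P Q` the first leaf
of `Q` has right depth `1` and every later leaf has right depth at least `2`, so the right depth
sequence determines the size of `P`; it then splits into the sequences of `P` and of `Q`
(shifted by one), and induction finishes the proof.
-/

namespace Bracketing

theorem size_pos : ∀ {n : ℕ}, Bracketing n → 0 < n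
  | _, .leaf => Nat.one_pos
  | _, .node P _ => Nat.add_pos_left P.size_pos _

theorem add_ne_one_of_node {k l : ℕ} (P : Bracketing k) (Q : Bracketing l) : k + l ≠ 1 := by
  have := P.size_pos
  have := Q.size_pos
  omega

theorem rdepth_eq_zero_iff : ∀ {n : ℕ} (B : Bracketing n) (i : Fin n),
    B.rdepth i = 0 ↔ (i : ℕ) = 0
  | _, .leaf, i => by simp [rdepth]
  | _, .node (k := k) P Q, i => by
    by_cases hi : (i : ℕ) < k
    · simp [rdepth, hi, rdepth_eq_zero_iff P]
    · simp only [rdepth, hi, dite_false, Nat.add_one_ne_zero, false_iff]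
      have := P.size_pos
      omega

theorem ofFn_rdepth_node {k l : ℕ} (P : Bracketing k) (Q : Bracketing l) :
    List.ofFn (node P Q).rdepth = List.ofFn P.rdepth ++ (List.ofFn Q.rdepth).map (· + 1) := by
  rw [List.ofFn_add, List.map_ofFn]
  congr 2 <;> funext i <;> simp [rdepth, Function.comp]

theorem rdepth_node_of_le {k l : ℕ} (P : Bracketing k) (Q : Bracketing l) {i : ℕ}
    (hki : k ≤ i) (hi : i < k + l) :
    (node P Q).rdepth ⟨i, hi⟩ = Q.rdepth ⟨i - k, by omega⟩ + 1 := by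
  simp [rdepth, Nat.not_lt.mpr hki]

theorem le_of_ofFn_rdepth_node_eq {k₁ l₁ k₂ l₂ : ℕ} (P₁ : Bracketing k₁) (Q₁ : Bracketing l₁)
    (P₂ : Bracketing k₂) (Q₂ : Bracketing l₂)
    (h : List.ofFn (node P₁ Q₁).rdepth = List.ofFn (node P₂ Q₂).rdepth) : k₁ ≤ k₂ := by
  by_contra! hk
  have hlen : k₁ + l₁ = k₂ + l₂ := by simpa using congrArg List.length h
  have hQ₁ := Q₁.size_pos
  have hentry := congrArg (·[k₁]?) h
  simp only [List.getElem?_ofFn, dif_pos (by omega : k₁ < k₁ + l₁),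
    dif_pos (by omega : k₁ < k₂ + l₂), Option.some.injEq] at hentry
  rw [rdepth_node_of_le _ _ le_rfl, rdepth_node_of_le _ _ hk.le] at hentry
  have h₁ : Q₁.rdepth ⟨k₁ - k₁, by omega⟩ = 0 := (Q₁.rdepth_eq_zero_iff _).mpr (Nat.sub_self k₁)
  have h₂ : Q₂.rdepth ⟨k₁ - k₂, by omega⟩ ≠ 0 := (Q₂.rdepth_eq_zero_iff _).not.mpr (by simp; omega)
  omega

theorem heq_of_ofFn_rdepth_eq {m : ℕ} (B₁ : Bracketing m) :
    ∀ {n : ℕ} (B₂ : Bracketing n), List.ofFn B₁.rdepth = List.ofFn B₂.rdepth → HEq B₁ B₂ := by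
  induction B₁ with
  | leaf =>
    intro n B₂ h
    cases B₂ with
    | leaf => rfl
    | node P Q => exact absurd (by simpa using congrArg List.length h.symm) (add_ne_one_of_node P Q)
  | @node k₁ l₁ P₁ Q₁ ihP ihQ =>
    intro n B₂ h
    cases B₂ with
    | leaf => exact absurd (by simpa using congrArg List.length h) (add_ne_one_of_node P₁ Q₁)
    | @node k₂ l₂ P₂ Q₂ =>
      obtain rfl := le_antisymm (le_of_ofFn_rdepth_node_eq _ _ _ _ h)
        (le_of_ofFn_rdepth_node_eq _ _ _ _ h.symm)
      obtain rfl : l₁ = l₂ := by simpa using congrArg List.length h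
      rw [ofFn_rdepth_node, ofFn_rdepth_node] at h
      obtain ⟨hP, hQ⟩ := List.append_inj h (by simp)
      have hQ := List.map_injective_iff.mpr (add_left_injective 1) hQ
      obtain rfl := eq_of_heq (ihP P₂ hP)
      obtain rfl := eq_of_heq (ihQ Q₂ hQ)
      rfl

end Bracketing

/-- Paper's Proposition 2.8: bracketings are uniquely determined by their right depth
sequences. -/
theorem stmt5 {n : ℕ} (B₁ B₂ : Bracketing n) (h : B₁.rdepth = B₂.rdepth) : B₁ = B₂ :=
  eq_of_heq (B₁.heq_of_ofFn_rdepth_eq B₂ (congrArg List.ofFn h))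
end

section
/- Exponentiation, i.e. the binary operation (a,b) ↦ a^b on the positive real numbers, is a Catalan operation: any two distinct bracketings of the same size induce distinct regular operations on ({x ∈ ℝ : x > 0}, (a,b) ↦ a^b). (Paper's Proposition 3.4.) -/
namespace Bracketing

variable {G : Type*} {op : G → G → G}

/-- Evaluation at the first `n` terms of a sequence, so that bracketings of different sizes
can be compared. -/
def evalSeq (op : G → G → G) {n : ℕ} (B : Bracketing n) (w : ℕ → G) : G :=
  B.eval op fun i => w i

@[simp]
theorem evalSeq_node {k l : ℕ} (P : Bracketing k) (Q : Bracketing l) (w : ℕ → G) :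
    (node P Q).evalSeq op w = op (P.evalSeq op w) (Q.evalSeq op fun j => w (k + j)) := by
  simp only [evalSeq, eval, Fin.val_castAdd, Fin.val_natAdd]

theorem evalSeq_congr {n : ℕ} (B : Bracketing n) {v w : ℕ → G} (h : ∀ i < n, v i = w i) :
    B.evalSeq op v = B.evalSeq op w :=
  congrArg (B.eval op) (funext fun i => h i i.isLt)

def probe (d e : G) (m : ℕ) (y : ℕ → G) (i : ℕ) : G :=
  if i = 0 then d else if i < m then e else y (i - m)

theorem evalSeq_probe_shift {m : ℕ} (hm : 0 < m) {l : ℕ} (Q : Bracketing l) (d e : G)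
    (y : ℕ → G) : (Q.evalSeq op fun j => probe d e m y (m + j)) = Q.evalSeq op y :=
  Q.evalSeq_congr fun j _ => by simp [probe, hm.ne']

section LeftZeroRightIdentity

variable {e : G} (hl : ∀ b, op e b = e) (hr : ∀ a, op a e = a)
include hl

theorem evalSeq_eq_of_head_eq {n : ℕ} (B : Bracketing n) {w : ℕ → G} (hw : w 0 = e) :
    B.evalSeq op w = e := by
  induction B generalizing w with
  | leaf => exact hw
  | node P Q ihP _ => rw [evalSeq_node, ihP hw, hl]

include hr

theorem evalSeq_eq_head {n : ℕ} (B : Bracketing n) {w : ℕ → G}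
    (hw : ∀ i, i ≠ 0 → i < n → w i = e) : B.evalSeq op w = w 0 := by
  induction B generalizing w with
  | leaf => rfl
  | @node k l P Q ihP _ =>
    have hk := P.size_pos
    have hQ := Q.size_pos
    rw [evalSeq_node, ihP fun i hi hik => hw i hi (by omega),
      evalSeq_eq_of_head_eq hl Q (hw k (by omega) (by omega)), hr]

theorem evalSeq_probe {k m : ℕ} (B : Bracketing k) (hkm : k ≤ m) (d : G) (y : ℕ → G) :
    B.evalSeq op (probe d e m y) = d :=
  evalSeq_eq_head hl hr B fun i hi hik => by simp [probe, hi, show i < m by omega]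

theorem evalSeq_node_probe {k l : ℕ} (P : Bracketing k) (Q : Bracketing l) (d : G)
    (y : ℕ → G) : (node P Q).evalSeq op (probe d e k y) = op d (Q.evalSeq op y) := by
  rw [evalSeq_node, evalSeq_probe hl hr P le_rfl, evalSeq_probe_shift P.size_pos]

theorem le_of_evalSeq_node_eq {d : G} (hd : Function.Injective (op d)) (hde : d ≠ e)
    {k l k' l' : ℕ} (P : Bracketing k) (Q : Bracketing l) (P' : Bracketing k') (Q' : Bracketing l')
    (h : ∀ w, (node P Q).evalSeq op w = (node P' Q').evalSeq op w) : k' ≤ k := by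
  by_contra! hkk'
  have hk := P.size_pos
  have hcollapse : ∀ y, op d (Q'.evalSeq op y) = d := fun y => by
    rw [← evalSeq_node_probe hl hr P' Q', ← h, evalSeq_node, evalSeq_probe hl hr P hkk'.le,
      evalSeq_eq_of_head_eq hl Q (by simp [probe, show k ≠ 0 by omega, hkk']), hr]
  have hdd : op d d = op d e := by
    simpa only [evalSeq_probe hl hr Q' le_rfl, hr] using hcollapse (probe d e l' fun _ => e)
  exact hde (hd hdd)

theorem evalSeq_left_eq_of_node_eq {k l l' : ℕ} (P P' : Bracketing k) (Q : Bracketing l)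
    (Q' : Bracketing l') (h : ∀ w, (node P Q).evalSeq op w = (node P' Q').evalSeq op w)
    (u : ℕ → G) : P.evalSeq op u = P'.evalSeq op u := by
  set v : ℕ → G := fun i => if i < k then u i else e
  have hv : ∀ {l : ℕ} (P : Bracketing k) (Q : Bracketing l),
      (node P Q).evalSeq op v = P.evalSeq op u := fun P Q => by
    rw [evalSeq_node, evalSeq_eq_of_head_eq hl Q (by simp [v]), hr]
    exact P.evalSeq_congr fun i hi => by simp [v, hi]
  rw [← hv P Q, h, hv]

theorem evalSeq_right_eq_of_node_eq {d : G} (hd : Function.Injective (op d)) {k l l' : ℕ}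
    (P P' : Bracketing k) (Q : Bracketing l) (Q' : Bracketing l')
    (h : ∀ w, (node P Q).evalSeq op w = (node P' Q').evalSeq op w) (y : ℕ → G) :
    Q.evalSeq op y = Q'.evalSeq op y :=
  hd <| by rw [← evalSeq_node_probe hl hr P Q, h, evalSeq_node_probe hl hr P' Q']

variable {d : G} (hd : Function.Injective (op d)) (hde : d ≠ e)
include hd hde

theorem heq_of_evalSeq_eq {n m : ℕ} (B₁ : Bracketing n) (B₂ : Bracketing m) (hnm : n = m)
    (h : ∀ w, B₁.evalSeq op w = B₂.evalSeq op w) : HEq B₁ B₂ := by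
  induction B₁ generalizing m with
  | leaf =>
    cases B₂ with
    | leaf => rfl
    | node P' Q' => have := P'.size_pos; have := Q'.size_pos; omega
  | @node k l P Q ihP ihQ =>
    cases B₂ with
    | leaf => have := P.size_pos; have := Q.size_pos; omega
    | @node k' l' P' Q' =>
      obtain rfl : k = k' := le_antisymm
        (le_of_evalSeq_node_eq hl hr hd hde P' Q' P Q fun w => (h w).symm)
        (le_of_evalSeq_node_eq hl hr hd hde P Q P' Q' h)
      obtain rfl : l = l' := by omega
      obtain rfl := eq_of_heq (ihP P' rfl (evalSeq_left_eq_of_node_eq hl hr P P' Q Q' h))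
      obtain rfl := eq_of_heq (ihQ Q' rfl (evalSeq_right_eq_of_node_eq hl hr hd P P Q Q' h))
      rfl

end LeftZeroRightIdentity

end Bracketing

theorem isCatalanOp_of_leftZero_of_rightId {G : Type*} {op : G → G → G} {e d : G}
    (hl : ∀ b, op e b = e) (hr : ∀ a, op a e = a) (hd : Function.Injective (op d))
    (hde : d ≠ e) : IsCatalanOp op := fun _ B₁ B₂ hne heval =>
  hne <| eq_of_heq <| B₁.heq_of_evalSeq_eq hl hr hd hde B₂ rfl fun w =>
    congrFun heval fun i => w i

/-- Paper's Proposition 3.4: exponentiation `(a,b) ↦ a^b` on the positive reals is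
Catalan. -/
theorem stmt9 :
    IsCatalanOp (fun a b : {x : ℝ // 0 < x} =>
      (⟨(a : ℝ) ^ (b : ℝ), Real.rpow_pos_of_pos a.2 _⟩ : {x : ℝ // 0 < x})) := by
  refine isCatalanOp_of_leftZero_of_rightId (e := ⟨1, one_pos⟩) (d := ⟨2, two_pos⟩)
    (fun b => Subtype.ext (Real.one_rpow b)) (fun a => Subtype.ext (Real.rpow_one a))
    (fun b c hbc => Subtype.ext ?_) (by simp)
  exact (Real.rpow_right_inj two_pos (by norm_num)).mp (congrArg Subtype.val hbc)
end

section
/- For the binary operation x ∘ y = x + 1 (mod 2) on the two-element set ℤ/2ℤ, the associative spectrum satisfies s(n) = 2 for every n ≥ 3. More precisely, for every bracketing B of size n and all c_1,…,c_n ∈ ℤ/2ℤ, the induced regular operation satisfies b(c_1,…,c_n) = c_1 + d (mod 2), where d is the left depth of x_1 in B. (Paper's Proposition 4.1.) -/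
/-! For `x ∘ y = x + a` in an additive monoid, each internal node on the path from the root
to `x₁` at which that path turns left contributes one `+ a`, and every other argument is
discarded; so `b(c) = c₁ + d • a` with `d` the left depth of `x₁`. Over `ℤ/2ℤ` with `a = 1`
only the parity of `d` matters, and for `n ≥ 3` both parities occur (consecutive values are
realised by the left comb and by a left comb grafted onto a cherry), so exactly the two
operations `c ↦ c₁` and `c ↦ c₁ + 1` arise. -/

namespace Bracketing

theorem one_le {n : ℕ} (B : Bracketing n) : 1 ≤ n := by
  induction B <;> omega

theorem eval_add_const {G : Type*} [AddMonoid G] (a : G) {n : ℕ} (B : Bracketing n)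
    (c : Fin n → G) (h : 0 < n) :
    B.eval (fun x _ => x + a) c = c ⟨0, h⟩ + B.ldepth ⟨0, h⟩ • a := by
  induction B with
  | leaf => simp [eval, ldepth]
  | node P Q ihP =>
    have hP : 0 < _ := P.one_le
    rw [eval, ihP _ hP]
    simp only [ldepth, hP, dif_pos, succ_nsmul, ← add_assoc]
    rfl

def leftComb : (m : ℕ) → Bracketing (m + 1)
  | 0 => leaf
  | m + 1 => node (leftComb m) leaf

theorem ldepth_leftComb (m : ℕ) : (leftComb m).ldepth 0 = m := by
  induction m with
  | zero => rfl
  | succ m ih => simp [leftComb, ldepth, ih]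

theorem exists_ldepth_cast_eq {n : ℕ} (hn : 3 ≤ n) (k : ZMod 2) :
    ∃ B : Bracketing n, (B.ldepth ⟨0, (Nat.succ_pos 2).trans_le hn⟩ : ZMod 2) = k := by
  obtain ⟨m, rfl⟩ := Nat.exists_eq_add_of_le' hn
  have hk : k = m ∨ k = m + 1 := by
    generalize (m : ZMod 2) = x
    revert k x
    decide
  rcases hk with rfl | rfl
  · refine ⟨leftComb (m + 2), ?_⟩
    rw [Fin.zero_eta, ldepth_leftComb, Nat.cast_add, ZMod.natCast_self, add_zero]
  · refine ⟨node (k := m + 1) (l := 2) (leftComb m) (node leaf leaf), ?_⟩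
    simp [ldepth, ldepth_leftComb]

end Bracketing

/-- Paper's Proposition 4.1: for `x ∘ y = x + 1 (mod 2)`, `s(n) = 2` for `n ≥ 3`; more
precisely `b(c₁,…,cₙ) = c₁ + d (mod 2)` where `d` is the left depth of `x₁` in `B`. -/
theorem stmt11 (n : ℕ) (hn : 3 ≤ n) :
    assocSpectrum (fun x _ : ZMod 2 => x + 1) n = 2 ∧
    ∀ (B : Bracketing n) (c : Fin n → ZMod 2),
      Bracketing.eval (fun x _ : ZMod 2 => x + 1) B c
        = c ⟨0, by omega⟩ + (B.ldepth ⟨0, by omega⟩ : ZMod 2) := by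
  have hpos : 0 < n := by omega
  have heval (B : Bracketing n) : B.eval (fun x _ : ZMod 2 => x + 1)
      = fun c => c ⟨0, hpos⟩ + (B.ldepth ⟨0, hpos⟩ : ZMod 2) := by
    funext c
    rw [B.eval_add_const 1 c hpos, nsmul_one]
  refine ⟨?_, fun B c => congrFun (heval B) c⟩
  let translate (k : ZMod 2) (c : Fin n → ZMod 2) : ZMod 2 := c ⟨0, hpos⟩ + k
  have htranslate : Function.Injective translate := fun k k' h => by
    simpa [translate] using congrFun h 0
  have hops (f : (Fin n → ZMod 2) → ZMod 2) :
      (∃ B : Bracketing n, f = B.eval (fun x _ : ZMod 2 => x + 1)) ↔ f ∈ Set.range translate := by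
    constructor
    · rintro ⟨B, rfl⟩
      exact ⟨_, (heval B).symm⟩
    · rintro ⟨k, rfl⟩
      obtain ⟨B, hB⟩ := Bracketing.exists_ldepth_cast_eq hn k
      exact ⟨B, by rw [heval, hB]⟩
  rw [assocSpectrum, Nat.card_congr (Equiv.subtypeEquivRight hops),
    Nat.card_range_of_injective htranslate, Nat.card_zmod]
end

section
/- For the binary operation x ∘ y = −x − y (equivalently 2x + 2y) on ℤ/3ℤ, the associative spectrum satisfies s(n) = ⌊2^n/3⌋ for every n ≥ 2. (Paper's Proposition 5.3; this is the operation numbered 624 in the Siena Catalog of three-element groupoids.) -/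
/-!
For `x ∘ y = -x - y` a bracketing induces `v ↦ ∑ ± v i`, the sign of leaf `i` being `(-1)` to
its depth, so the regular operations correspond to the sign sequences of bracketings. In
`(ZMod 3)ˣ` these are generated from `[1]` by `p, q ↦ -(p ++ q)`, and grafting a cherry onto a
leaf replaces an entry `x` by `-x, -x`. A sign sequence arises iff it sums to `1` and either is
`[1]` or has two equal neighbours. For the converse, merge an equal pair `x, x` into `-x`, which
keeps the sum since `x + x = -x` in `ZMod 3`: choosing a pair next to an entry `-x`, the merged
list still has an equal pair; a constant list with sum `1` is `[-1, -1]` or has length `≥ 4`.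
Of the `⌊2^n/3⌋ + n % 2` sign sequences of length `n` with sum `1`, exactly `n % 2` alternate.
-/

open Finset

theorem ZMod.units_three_eq_neg_of_ne : ∀ x y : (ZMod 3)ˣ, x ≠ y → x = -y := by decide

theorem ZMod.units_three_ne_neg : ∀ x : (ZMod 3)ˣ, x ≠ -x := by decide

theorem ZMod.units_three_add_self : ∀ x : (ZMod 3)ˣ, (x : ZMod 3) + x = -x := by decide

theorem ZMod.card_units_three_add_eq_one : ∀ s : ZMod 3,
    #{u : (ZMod 3)ˣ | (u : ZMod 3) + s = 1} = if s = 1 then 0 else 1 := by decide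

-- `B.coeff i = (-1) ^ B.depth i`.
def Bracketing.coeff : {n : ℕ} → Bracketing n → Fin n → (ZMod 3)ˣ
  | _, .leaf => 1
  | _, .node P Q => -Fin.append P.coeff Q.coeff

theorem Bracketing.eval_neg_sub : ∀ {n : ℕ} (B : Bracketing n) (v : Fin n → ZMod 3),
    B.eval (fun x y => -x - y) v = ∑ i, (B.coeff i : ZMod 3) * v i
  | _, .leaf, v => by simp [Bracketing.eval, Bracketing.coeff]
  | _, .node P Q, v => by
    simp only [Bracketing.eval, Bracketing.coeff, P.eval_neg_sub, Q.eval_neg_sub,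
      Fin.sum_univ_add, Pi.neg_apply, Fin.append_left, Fin.append_right, Units.val_neg, neg_mul,
      sum_neg_distrib]
    ring

theorem spectrum_neg_sub_eq_card_range_coeff (n : ℕ) :
    assocSpectrum (fun x y : ZMod 3 => -x - y) n =
      Nat.card (Set.range (Bracketing.coeff (n := n))) := by
  let E : (Fin n → (ZMod 3)ˣ) → (Fin n → ZMod 3) → ZMod 3 :=
    fun c v => ∑ i, (c i : ZMod 3) * v i
  have hE : Function.Injective E := fun c d h => funext fun j => Units.ext <| by
    simpa [E, Pi.single_apply] using congrFun h (Pi.single j 1)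
  have heval :
      (fun B : Bracketing n => B.eval (fun x y : ZMod 3 => -x - y)) = E ∘ Bracketing.coeff :=
    funext fun B => funext B.eval_neg_sub
  rw [← Nat.card_image_of_injective hE, ← Set.range_comp, ← heval]
  exact Nat.card_congr (Equiv.subtypeEquivRight fun f => by simp [eq_comm])

inductive IsCoeffList : List (ZMod 3)ˣ → Prop
  | leaf : IsCoeffList [1]
  | node {p q : List (ZMod 3)ˣ} :
      IsCoeffList p → IsCoeffList q → IsCoeffList ((p ++ q).map (-·))

theorem Bracketing.ofFn_coeff_node {k m : ℕ} (P : Bracketing k) (Q : Bracketing m) :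
    List.ofFn (Bracketing.node P Q).coeff =
      (List.ofFn P.coeff ++ List.ofFn Q.coeff).map (-·) := by
  rw [← List.ofFn_fin_append, List.map_ofFn]
  rfl

theorem Bracketing.isCoeffList_ofFn_coeff : ∀ {n : ℕ} (B : Bracketing n),
    IsCoeffList (List.ofFn B.coeff)
  | _, .leaf => IsCoeffList.leaf
  | _, .node P Q => by
    rw [Bracketing.ofFn_coeff_node]
    exact IsCoeffList.node P.isCoeffList_ofFn_coeff Q.isCoeffList_ofFn_coeff

theorem IsCoeffList.exists_bracketing {l : List (ZMod 3)ˣ} (h : IsCoeffList l) :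
    ∃ (n : ℕ) (B : Bracketing n), List.ofFn B.coeff = l := by
  induction h with
  | leaf => exact ⟨1, .leaf, rfl⟩
  | node _ _ ihp ihq =>
    obtain ⟨k, P, rfl⟩ := ihp
    obtain ⟨m, Q, rfl⟩ := ihq
    exact ⟨k + m, .node P Q, Bracketing.ofFn_coeff_node P Q⟩

theorem Bracketing.range_coeff (n : ℕ) :
    Set.range (Bracketing.coeff (n := n)) = {c | IsCoeffList (List.ofFn c)} := by
  ext c
  refine ⟨?_, fun h => ?_⟩
  · rintro ⟨B, rfl⟩
    exact B.isCoeffList_ofFn_coeff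
  · obtain ⟨m, B, hB⟩ := h.exists_bracketing
    obtain rfl : m = n := by simpa using congrArg List.length hB
    exact ⟨B, List.ofFn_injective hB⟩

theorem IsCoeffList.sum_eq_one {l : List (ZMod 3)ˣ} (h : IsCoeffList l) :
    (l.map Units.val).sum = 1 := by
  induction h with
  | leaf => simp
  | node _ _ ihp ihq =>
    have sum_neg (l : List (ZMod 3)ˣ) :
        ((l.map (-·)).map Units.val).sum = -(l.map Units.val).sum := by
      induction l <;> simp_all [add_comm]
    rw [sum_neg, List.map_append, List.sum_append, ihp, ihq]
    decide

theorem IsCoeffList.eq_singleton_or_not_isChain {l : List (ZMod 3)ˣ} (h : IsCoeffList l) :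
    l = [1] ∨ ¬ l.IsChain (· ≠ ·) := by
  induction h with
  | leaf => exact .inl rfl
  | @node p q _ _ ihp ihq =>
    right
    rw [List.isChain_map]
    simp only [ne_eq, neg_inj]
    rcases ihp with rfl | hp
    · rcases ihq with rfl | hq
      · simp
      · exact fun h => hq h.right_of_append
    · exact fun h => hp h.left_of_append

theorem IsCoeffList.expand {l : List (ZMod 3)ˣ} (h : IsCoeffList l) :
    ∀ {a b : List (ZMod 3)ˣ} {y : (ZMod 3)ˣ}, l = a ++ y :: b →
      IsCoeffList (a ++ -y :: -y :: b) := by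
  induction h with
  | leaf =>
    intro a b y e
    obtain ⟨rfl, rfl, rfl⟩ : a = [] ∧ y = 1 ∧ b = [] := by
      rcases a with _ | ⟨_, _ | _⟩ <;> simp_all [eq_comm]
    exact IsCoeffList.node .leaf .leaf
  | @node p q hp hq ihp ihq =>
    intro a b y e
    have neg_neg_map (l : List (ZMod 3)ˣ) : (l.map (-·)).map (-·) = l := by simp
    rw [List.map_append] at e
    have in_q : ∀ a', a = p.map (-·) ++ a' → q.map (-·) = a' ++ y :: b →
        IsCoeffList (a ++ -y :: -y :: b) := by
      intro a' ha hq'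
      have := ihq (a := a'.map (-·)) (b := b.map (-·)) (y := -y) (by
        rw [← neg_neg_map q, hq']; simp)
      simpa [ha, Function.comp_def] using IsCoeffList.node hp this
    rcases List.append_eq_append_iff.mp e with ⟨a', ha, hq'⟩ | ⟨c, hp', hb⟩
    · exact in_q a' ha hq'
    · rcases c with _ | ⟨z, c⟩
      · exact in_q [] (by simpa using hp'.symm) (by simpa using hb.symm)
      · obtain ⟨rfl, rfl⟩ : y = z ∧ b = c ++ q.map (-·) := by simpa using hb
        have := ihp (a := a.map (-·)) (b := c.map (-·)) (y := -y) (by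
          rw [← neg_neg_map p, hp']; simp)
        simpa [Function.comp_def] using IsCoeffList.node this hq

theorem List.not_isChain_ne_of_eq_append {α : Type*} {l a b : List α} {x : α}
    (h : l = a ++ x :: x :: b) : ¬ l.IsChain (· ≠ ·) := fun hc =>
  List.isChain_iff_forall_rel_of_append_cons_cons.mp hc h rfl

theorem List.not_isChain_ne_cases {α : Type*} {l : List α} (hl : ¬ l.IsChain (· ≠ ·)) :
    (∃ x, ∀ y ∈ l, y = x) ∨
      ∃ a b x y, y ≠ x ∧ (l = a ++ y :: x :: x :: b ∨ l = a ++ x :: x :: y :: b) := by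
  induction l with
  | nil => exact (hl .nil).elim
  | cons z t ih =>
    rcases t with _ | ⟨w, t⟩
    · exact (hl (.singleton z)).elim
    by_cases hzw : z = w
    · subst hzw
      rcases t with _ | ⟨y, t⟩
      · exact .inl ⟨z, by simp⟩
      by_cases hyz : y = z
      · subst hyz
        rcases ih (List.not_isChain_ne_of_eq_append (a := []) rfl) with
          ⟨x, hx⟩ | ⟨a, b, x, y', hne, e | e⟩
        · exact .inl ⟨x, fun u hu => hx u (by simpa using hu)⟩
        · exact .inr ⟨y :: a, b, x, y', hne, .inl (by simp [e])⟩
        · exact .inr ⟨y :: a, b, x, y', hne, .inr (by simp [e])⟩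
      · exact .inr ⟨[], t, z, y, hyz, .inr rfl⟩
    · have ht : ¬ (w :: t).IsChain (· ≠ ·) :=
        fun h => hl (List.isChain_cons_cons.mpr ⟨hzw, h⟩)
      rcases ih ht with ⟨x, hx⟩ | ⟨a, b, x, y, hne, e | e⟩
      · rcases t with _ | ⟨u, t⟩
        · exact (ht (.singleton w)).elim
        obtain rfl : u = w := (hx u (by simp)).trans (hx w (by simp)).symm
        exact .inr ⟨[], t, u, z, hzw, .inl rfl⟩
      · exact .inr ⟨z :: a, b, x, y, hne, .inl (by simp [e])⟩
      · exact .inr ⟨z :: a, b, x, y, hne, .inr (by simp [e])⟩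

theorem exists_merge_of_not_isChain {l : List (ZMod 3)ˣ} (hs : (l.map Units.val).sum = 1)
    (hl : ¬ l.IsChain (· ≠ ·)) :
    ∃ a b x, l = a ++ x :: x :: b ∧
      (a ++ -x :: b = [1] ∨ ¬ (a ++ -x :: b).IsChain (· ≠ ·)) := by
  rcases List.not_isChain_ne_cases hl with ⟨x, hx⟩ | ⟨a, b, x, y, hne, rfl | rfl⟩
  · obtain ⟨n, rfl⟩ : ∃ n, l = List.replicate n x :=
      ⟨_, List.eq_replicate_iff.mpr ⟨rfl, hx⟩⟩
    match n, hs, hl with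
    | 0, _, hl | 1, _, hl => exact (hl (by simp)).elim
    | 2, hs, _ =>
      have : ((-x : (ZMod 3)ˣ) : ZMod 3) = 1 := by
        simpa [ZMod.units_three_add_self] using hs
      exact ⟨[], [], x, rfl, .inl (by simpa using Units.ext this)⟩
    | 3, hs, _ =>
      simp [ZMod.units_three_add_self] at hs
    | n + 4, _, _ =>
      exact ⟨[], List.replicate (n + 2) x, x, rfl,
        .inr (List.not_isChain_ne_of_eq_append (a := [-x]) rfl)⟩
  · rw [ZMod.units_three_eq_neg_of_ne _ _ hne]
    exact ⟨a ++ [-x], b, x, by simp,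
      .inr (List.not_isChain_ne_of_eq_append (a := a) (x := -x) (b := b) (by simp))⟩
  · rw [ZMod.units_three_eq_neg_of_ne _ _ hne]
    exact ⟨a, -x :: b, x, rfl, .inr (List.not_isChain_ne_of_eq_append rfl)⟩

theorem isCoeffList_iff {l : List (ZMod 3)ˣ} :
    IsCoeffList l ↔ (l.map Units.val).sum = 1 ∧ (l = [1] ∨ ¬ l.IsChain (· ≠ ·)) := by
  refine ⟨fun h => ⟨h.sum_eq_one, h.eq_singleton_or_not_isChain⟩, ?_⟩
  induction hlen : l.length using Nat.strong_induction_on generalizing l with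
  | _ n ih =>
    rintro ⟨hs, rfl | hl⟩
    · exact .leaf
    obtain ⟨a, b, x, rfl, hmerge⟩ := exists_merge_of_not_isChain hs hl
    have hs' : ((a ++ -x :: b).map Units.val).sum = 1 := by
      simp only [List.map_append, List.map_cons, List.sum_append, List.sum_cons,
        Units.val_neg] at hs ⊢
      linear_combination hs - ZMod.units_three_add_self x
    have := ih _ (by simp at hlen ⊢; omega) rfl ⟨hs', hmerge⟩
    simpa using this.expand rfl

-- The first sign is determined by the others, and exists unless these already sum to `1`.
theorem card_sum_eq_one_succ_add (n : ℕ) :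
    #{c : Fin (n + 1) → (ZMod 3)ˣ | ∑ i, (c i : ZMod 3) = 1} +
      #{c : Fin n → (ZMod 3)ˣ | ∑ i, (c i : ZMod 3) = 1} = 2 ^ n := by
  have hsucc : #{c : Fin (n + 1) → (ZMod 3)ˣ | ∑ i, (c i : ZMod 3) = 1} =
      #{c : Fin n → (ZMod 3)ˣ | ∑ i, (c i : ZMod 3) ≠ 1} := by
    rw [card_filter, card_filter, ← (Fin.consEquiv fun _ => (ZMod 3)ˣ).sum_comp,
      Fintype.sum_prod_type_right]
    refine sum_congr rfl fun w _ => ?_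
    simp only [Fin.consEquiv_apply, Fin.sum_univ_succ, Fin.cons_zero, Fin.cons_succ,
      ← card_filter, ZMod.card_units_three_add_eq_one]
    split_ifs <;> simp_all
  rw [hsucc, add_comm, card_filter_add_card_filter_not, card_univ, Fintype.card_fun,
    ZMod.card_units, Fintype.card_fin]

theorem Nat.two_pow_mod_three (n : ℕ) : 2 ^ n % 3 = 1 + n % 2 := by
  induction n with
  | zero => rfl
  | succ n ih =>
    rw [pow_succ, Nat.mul_mod, ih]
    rcases Nat.mod_two_eq_zero_or_one n with h | h <;> simp [h, Nat.add_mod]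

theorem card_sum_eq_one (n : ℕ) :
    #{c : Fin n → (ZMod 3)ˣ | ∑ i, (c i : ZMod 3) = 1} = 2 ^ n / 3 + n % 2 := by
  induction n with
  | zero => rfl
  | succ n ih =>
    have hrec := card_sum_eq_one_succ_add n
    have hmod := Nat.two_pow_mod_three n
    rw [pow_succ]
    omega

theorem eq_neg_one_pow_mul_of_isChain {m : ℕ} {c : Fin (m + 1) → (ZMod 3)ˣ}
    (h : (List.ofFn c).IsChain (· ≠ ·)) (i : Fin (m + 1)) : c i = (-1) ^ (i : ℕ) * c 0 := by
  rw [List.isChain_ofFn] at h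
  obtain ⟨i, hi⟩ := i
  induction i with
  | zero => simp
  | succ i ih =>
    rw [ZMod.units_three_eq_neg_of_ne _ _ (h i hi).symm, ih (by omega), pow_succ, mul_neg_one,
      neg_mul]

theorem sum_of_isChain {m : ℕ} {c : Fin (m + 1) → (ZMod 3)ˣ}
    (h : (List.ofFn c).IsChain (· ≠ ·)) :
    ∑ i, (c i : ZMod 3) = if Even (m + 1) then 0 else (c 0 : ZMod 3) := by
  calc ∑ i, (c i : ZMod 3) = (∑ i : Fin (m + 1), (-1 : ZMod 3) ^ (i : ℕ)) * c 0 := by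
        rw [sum_mul]
        exact sum_congr rfl fun i _ => by rw [eq_neg_one_pow_mul_of_isChain h i]; simp
    _ = _ := by
        rw [Fin.sum_univ_eq_sum_range (fun i => (-1 : ZMod 3) ^ i), neg_one_geom_sum]
        split_ifs <;> simp

theorem card_sum_eq_one_isChain {n : ℕ} (hn : 0 < n) :
    #{c : Fin n → (ZMod 3)ˣ | ∑ i, (c i : ZMod 3) = 1 ∧ (List.ofFn c).IsChain (· ≠ ·)} =
      n % 2 := by
  obtain ⟨m, rfl⟩ : ∃ m, n = m + 1 := ⟨n - 1, by omega⟩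
  rcases Nat.even_or_odd (m + 1) with heven | hodd
  · rw [Nat.even_iff.mp heven, card_eq_zero, filter_eq_empty_iff]
    rintro c - ⟨hs, hc⟩
    simp [sum_of_isChain hc, heven] at hs
  · rw [Nat.odd_iff.mp hodd, card_eq_one]
    refine ⟨fun i => (-1) ^ (i : ℕ), ?_⟩
    have halt :
        (List.ofFn fun i : Fin (m + 1) => ((-1) ^ (i : ℕ) : (ZMod 3)ˣ)).IsChain (· ≠ ·) := by
      rw [List.isChain_ofFn]
      intro i _
      rw [pow_succ, mul_neg_one]
      exact ZMod.units_three_ne_neg _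
    ext c
    simp only [mem_filter, mem_univ, true_and, mem_singleton]
    constructor
    · rintro ⟨hs, hc⟩
      have hc0 : c 0 = 1 := by
        simpa [sum_of_isChain hc, Nat.not_even_iff_odd.mpr hodd] using hs
      funext i
      rw [eq_neg_one_pow_mul_of_isChain hc, hc0, mul_one]
    · rintro rfl
      refine ⟨?_, halt⟩
      rw [sum_of_isChain halt, if_neg (Nat.not_even_iff_odd.mpr hodd)]
      simp

theorem card_isCoeffList_ofFn {n : ℕ} (hn : 2 ≤ n) :
    Nat.card {c : Fin n → (ZMod 3)ˣ // IsCoeffList (List.ofFn c)} = 2 ^ n / 3 := by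
  classical
  have hiff (c : Fin n → (ZMod 3)ˣ) : IsCoeffList (List.ofFn c) ↔
      ∑ i, (c i : ZMod 3) = 1 ∧ ¬ (List.ofFn c).IsChain (· ≠ ·) := by
    have hne : List.ofFn c ≠ [1] := ne_of_apply_ne List.length (by simp; omega)
    simp [isCoeffList_iff, List.map_ofFn, List.sum_ofFn, hne]
  have hsplit := card_filter_add_card_filter_not
    (s := {c : Fin n → (ZMod 3)ˣ | ∑ i, (c i : ZMod 3) = 1})
    (fun c => (List.ofFn c).IsChain (· ≠ ·))
  rw [filter_filter, filter_filter, card_sum_eq_one, card_sum_eq_one_isChain (by omega)] at hsplit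
  rw [Nat.card_congr (Equiv.subtypeEquivRight hiff), Nat.card_eq_fintype_card,
    Fintype.card_subtype]
  omega

/-- Paper's Proposition 5.3: for `x ∘ y = -x - y` on `ℤ/3ℤ`, `s(n) = ⌊2^n/3⌋` for
`n ≥ 2`. -/
theorem stmt14 (n : ℕ) (hn : 2 ≤ n) :
    assocSpectrum (fun x y : ZMod 3 => -x - y) n = 2 ^ n / 3 := by
  rw [spectrum_neg_sub_eq_card_range_coeff, Bracketing.range_coeff]
  exact card_isCoeffList_ofFn hn
end

section
/- For the binary operation ∘ on the three-element set {0,1,2} defined by x ∘ y = 1 if x = y ∈ {1,2} and x ∘ y = 0 otherwise (i.e. 1∘1 = 2∘2 = 1 and all other products are 0), the associative spectrum satisfies s(n) = F_{n+1} − 1 for every n ≥ 2, where F_k denotes the k-th Fibonacci number (F_1 = F_2 = 1). (Paper's Proposition 5.6; this is operation 79 in the Siena Catalog.) -/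
/-
A bracketing of size `n ≥ 2` evaluates to `0` or `1`. Group its leaves into blocks: a cherry
(two sibling leaves) is a block of size 2, every other leaf a block of size 1. The tree evaluates
to `1` exactly when every single leaf carries `1` and every cherry carries two equal nonzero
values, because `a ∘ b = 1` iff `a = b = 1` as soon as one of `a, b` lies in `{0, 1}`. Hence the
regular operation determines and is determined by the block sequence, a composition of `n` into
parts `1` and `2`; conversely every such composition except `1 + ⋯ + 1` is realised. There are
`F_{n+1}` compositions of `n` into parts `1` and `2`.
-/

theorem card_range_eq_of_eq_iff {α β γ : Type*} {f : α → β} {g : α → γ}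
    (h : ∀ a b, f a = f b ↔ g a = g b) : Nat.card (Set.range f) = Nat.card (Set.range g) := by
  have hker : Setoid.ker f = Setoid.ker g := Setoid.ext h
  rw [← Nat.card_congr (Setoid.quotientKerEquivRange f),
    ← Nat.card_congr (Setoid.quotientKerEquivRange g), hker]

theorem List.exists_ofFn_eq {α : Type*} {n : ℕ} {w : List α} (h : w.length = n) :
    ∃ v : Fin n → α, List.ofFn v = w := by
  subst h
  exact ⟨w.get, List.ofFn_get w⟩

def oneTwoCompositions : ℕ → Finset (List ℕ)
  | 0 => {[]}
  | 1 => {[1]}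
  | n + 2 => (oneTwoCompositions (n + 1)).image (List.cons 1) ∪
      (oneTwoCompositions n).image (List.cons 2)

theorem mem_oneTwoCompositions : ∀ {n : ℕ} {l : List ℕ},
    l ∈ oneTwoCompositions n ↔ (∀ x ∈ l, x = 1 ∨ x = 2) ∧ l.sum = n
  | 0, [] | 1, [] | n + 2, [] => by simp [oneTwoCompositions]
  | 0, x :: l => by simp [oneTwoCompositions]; omega
  | 1, x :: l => by
    have hl := mem_oneTwoCompositions (n := 0) (l := l)
    simp only [oneTwoCompositions, Finset.mem_singleton] at hl ⊢
    simp only [List.cons.injEq, List.forall_mem_cons, List.sum_cons, hl]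
    grind
  | n + 2, x :: l => by
    simp only [oneTwoCompositions, Finset.mem_union, Finset.mem_image, List.cons.injEq,
      mem_oneTwoCompositions, List.forall_mem_cons, List.sum_cons]
    grind

theorem card_oneTwoCompositions : ∀ n, (oneTwoCompositions n).card = Nat.fib (n + 1)
  | 0 | 1 => rfl
  | n + 2 => by
    rw [oneTwoCompositions, Finset.card_union_of_disjoint,
      Finset.card_image_of_injective _ List.cons_injective,
      Finset.card_image_of_injective _ List.cons_injective,
      card_oneTwoCompositions n, card_oneTwoCompositions (n + 1), Nat.fib_add_two (n := n + 1),
      add_comm]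
    simp [Finset.disjoint_left]

theorem replicate_one_mem_oneTwoCompositions (n : ℕ) :
    List.replicate n 1 ∈ oneTwoCompositions n := by
  simp [mem_oneTwoCompositions]

theorem two_mem_iff_ne_replicate_one {l : List ℕ} (hl : ∀ x ∈ l, x = 1 ∨ x = 2) :
    2 ∈ l ↔ l ≠ List.replicate l.sum 1 := by
  refine ⟨fun h2 hl1 => ?_, fun hne => by_contra fun h2 => hne ?_⟩
  · have := List.mem_replicate.1 (hl1 ▸ h2)
    omega
  · have hall : ∀ x ∈ l, x = 1 := fun x hx =>
      (hl x hx).resolve_right (by rintro rfl; exact h2 hx)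
    rw [List.sum_eq_card_nsmul l 1 hall, smul_eq_mul, mul_one]
    exact List.eq_replicate_iff.2 ⟨rfl, hall⟩

def op79 (x y : Fin 3) : Fin 3 := if x = y ∧ x ≠ 0 then 1 else 0

lemma op79_le_one (a b : Fin 3) : op79 a b ≤ 1 := by
  unfold op79; split <;> decide

lemma op79_eq_one_iff_of_le_one {a b : Fin 3} (h : a ≤ 1 ∨ b ≤ 1) :
    op79 a b = 1 ↔ a = 1 ∧ b = 1 := by
  revert a b; decide

lemma Fin.eq_iff_eq_one_iff_eq_one_of_le_one {a b : Fin 3} (ha : a ≤ 1) (hb : b ≤ 1) :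
    a = b ↔ (a = 1 ↔ b = 1) := by
  revert a b; decide

/-- Whether a word over `Fin 3` is evaluated to `1` by a bracketing with block sequence `l`. -/
def Accepts : List ℕ → List (Fin 3) → Prop
  | [], [] => True
  | 1 :: l, x :: w => x = 1 ∧ Accepts l w
  | 2 :: l, x :: y :: w => x = y ∧ x ≠ 0 ∧ Accepts l w
  | _, _ => False

theorem accepts_append {l₁ : List ℕ} {w₁ : List (Fin 3)} (l₂ : List ℕ) (w₂ : List (Fin 3))
    (h : w₁.length = l₁.sum) :
    Accepts (l₁ ++ l₂) (w₁ ++ w₂) ↔ Accepts l₁ w₁ ∧ Accepts l₂ w₂ := by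
  induction l₁ generalizing w₁ with
  | nil => simp_all [Accepts]
  | cons x l₁ ih =>
    match x, w₁, h with
    | 1, _ :: w₁, h => simp [Accepts, ih (w₁ := w₁) (by simp at h; omega), and_assoc]
    | 2, _ :: _ :: w₁, h => simp [Accepts, ih (w₁ := w₁) (by simp at h; omega), and_assoc]
    | 0, w₁, _ | k + 3, w₁, _ => cases w₁ <;> simp [Accepts]
    | 1, [], h | 2, [], h | 2, [_], h => simp at h; omega

def witness : List ℕ → List (Fin 3)
  | [] => []
  | k :: l => List.replicate k (Fin.ofNat 3 k) ++ witness l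

theorem length_witness (l : List ℕ) : (witness l).length = l.sum := by
  induction l with
  | nil => rfl
  | cons k l ih => simp [witness, ih]

theorem accepts_witness {l : List ℕ} (hl : ∀ x ∈ l, x = 1 ∨ x = 2) : Accepts l (witness l) := by
  induction l with
  | nil => trivial
  | cons x l ih =>
    simp only [List.forall_mem_cons] at hl
    rcases hl.1 with rfl | rfl <;> simp [witness, Accepts, Fin.ofNat, ih hl.2]

theorem eq_of_accepts_witness {l l' : List ℕ} (hl : ∀ x ∈ l, x = 1 ∨ x = 2)
    (hl' : ∀ x ∈ l', x = 1 ∨ x = 2) (h : Accepts l (witness l'))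
    (h' : Accepts l' (witness l)) : l = l' := by
  induction l generalizing l' with
  | nil =>
    cases l' with
    | nil => rfl
    | cons y l' =>
      rcases (List.forall_mem_cons.1 hl').1 with rfl | rfl <;>
        simp [witness, Accepts, Fin.ofNat] at h
  | cons x l ih =>
    simp only [List.forall_mem_cons] at hl
    cases l' with
    | nil => rcases hl.1 with rfl | rfl <;> simp [witness, Accepts, Fin.ofNat] at h'
    | cons y l' =>
      simp only [List.forall_mem_cons] at hl'
      rcases hl.1 with rfl | rfl <;> rcases hl'.1 with rfl | rfl <;>
        simp [witness, Accepts, Fin.ofNat] at h h' ⊢ <;> exact ih hl.2 hl'.2 h h'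

namespace Bracketing

def isLeaf : {n : ℕ} → Bracketing n → Bool
  | _, .leaf => true
  | _, .node _ _ => false

/-- The sizes of the blocks of leaves from left to right: `2` for a cherry, `1` for a leaf whose
sibling is not a leaf (or for the one-leaf tree). -/
def blocks : {n : ℕ} → Bracketing n → List ℕ
  | _, .leaf => [1]
  | _, .node P Q => if P.isLeaf && Q.isLeaf then [2] else P.blocks ++ Q.blocks

theorem isLeaf_eq_false {n : ℕ} (hn : 2 ≤ n) (B : Bracketing n) : B.isLeaf = false := by
  cases B with
  | leaf => omega
  | node P Q => rfl

theorem blocks_mem {n : ℕ} (B : Bracketing n) : ∀ x ∈ B.blocks, x = 1 ∨ x = 2 := by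
  induction B with
  | leaf => simp [blocks]
  | node P Q ihP ihQ =>
    rw [blocks]
    split
    · simp
    · simpa [or_imp, forall_and] using ⟨ihP, ihQ⟩

theorem sum_blocks {n : ℕ} (B : Bracketing n) : B.blocks.sum = n := by
  induction B with
  | leaf => rfl
  | node P Q ihP ihQ =>
    rw [blocks]
    split
    · cases P <;> cases Q <;> simp_all [isLeaf]
    · simp [ihP, ihQ]

theorem two_mem_blocks {n : ℕ} {B : Bracketing n} (hB : B.isLeaf = false) : 2 ∈ B.blocks := by
  induction B with
  | leaf => simp [isLeaf] at hB
  | node P Q ihP ihQ =>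
    rw [blocks]
    split
    · simp
    · cases hP : P.isLeaf
      · simp [ihP hP]
      · simp_all

theorem eval_op79_le_one {n : ℕ} {B : Bracketing n} (hB : B.isLeaf = false)
    (v : Fin n → Fin 3) : B.eval op79 v ≤ 1 := by
  cases B with
  | leaf => simp [isLeaf] at hB
  | node P Q => exact op79_le_one _ _

theorem eval_op79_eq_one_iff {n : ℕ} (B : Bracketing n) (v : Fin n → Fin 3) :
    B.eval op79 v = 1 ↔ Accepts B.blocks (List.ofFn v) := by
  induction B with
  | leaf => simp [eval, blocks, Accepts]
  | node P Q ihP ihQ =>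
    rw [eval, blocks, List.ofFn_add]
    split
    case isTrue h =>
      cases P <;> cases Q <;> simp [isLeaf] at h
      simp [eval, op79, Accepts]
    case isFalse h =>
      have hle : P.eval op79 (fun i => v (Fin.castAdd _ i)) ≤ 1 ∨
          Q.eval op79 (fun i => v (Fin.natAdd _ i)) ≤ 1 := by
        cases hP : P.isLeaf
        · exact .inl (eval_op79_le_one hP _)
        · exact .inr (eval_op79_le_one (by simpa [hP] using h) _)
      rw [op79_eq_one_iff_of_le_one hle, ihP, ihQ, accepts_append _ _ (by simp [sum_blocks])]
      rfl

theorem eval_op79_eq_eval_op79_iff {n : ℕ} (hn : 2 ≤ n) (B B' : Bracketing n) :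
    B.eval op79 = B'.eval op79 ↔ B.blocks = B'.blocks := by
  have hle (C : Bracketing n) v := eval_op79_le_one (isLeaf_eq_false hn C) v
  have hAccepts : B.eval op79 = B'.eval op79 ↔
      ∀ v : Fin n → Fin 3, Accepts B.blocks (List.ofFn v) ↔ Accepts B'.blocks (List.ofFn v) := by
    simp only [funext_iff, Fin.eq_iff_eq_one_iff_eq_one_of_le_one (hle B _) (hle B' _),
      eval_op79_eq_one_iff]
  refine hAccepts.trans ⟨fun h => ?_, fun h v => h ▸ Iff.rfl⟩
  have hwitness (C : Bracketing n) : ∃ v : Fin n → Fin 3, List.ofFn v = witness C.blocks :=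
    List.exists_ofFn_eq (by rw [length_witness, sum_blocks])
  obtain ⟨v, hv⟩ := hwitness B
  obtain ⟨v', hv'⟩ := hwitness B'
  refine eq_of_accepts_witness (blocks_mem B) (blocks_mem B') ?_ ?_
  · exact hv' ▸ (h v').2 (hv' ▸ accepts_witness (blocks_mem B'))
  · exact hv ▸ (h v).1 (hv ▸ accepts_witness (blocks_mem B))

theorem exists_blocks_append {l : List ℕ} (hl : ∀ x ∈ l, x = 1 ∨ x = 2) {m : ℕ}
    (B : Bracketing m) (hB : B.isLeaf = false) :
    ∃ (k : ℕ) (C : Bracketing k), C.isLeaf = false ∧ C.blocks = B.blocks ++ l := by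
  induction l generalizing m with
  | nil => exact ⟨m, B, hB, by simp⟩
  | cons x l ih =>
    simp only [List.forall_mem_cons] at hl
    have hblock : ∃ (j : ℕ) (D : Bracketing j), (B.node D).blocks = B.blocks ++ [x] := by
      rcases hl.1 with rfl | rfl
      · exact ⟨1, leaf, by simp [blocks, hB]⟩
      · exact ⟨2, node leaf leaf, by simp [blocks, isLeaf]⟩
    obtain ⟨j, D, hD⟩ := hblock
    obtain ⟨k, C, hC, hCb⟩ := ih hl.2 (B.node D) rfl
    exact ⟨k, C, hC, by simp [hCb, hD]⟩

theorem exists_blocks_eq {l : List ℕ} (hl : ∀ x ∈ l, x = 1 ∨ x = 2) (h2 : 2 ∈ l) :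
    ∃ (k : ℕ) (C : Bracketing k), C.isLeaf = false ∧ C.blocks = l := by
  induction l with
  | nil => simp at h2
  | cons x l ih =>
    simp only [List.forall_mem_cons] at hl
    rcases hl.1 with rfl | rfl
    · obtain ⟨k, C, hC, hCb⟩ := ih hl.2 (by simpa using h2)
      exact ⟨1 + k, node leaf C, rfl, by simp [blocks, hC, hCb]⟩
    · exact exists_blocks_append hl.2 (node leaf leaf) rfl

theorem range_blocks {n : ℕ} (hn : 2 ≤ n) :
    Set.range (blocks : Bracketing n → List ℕ) =
      ↑((oneTwoCompositions n).erase (List.replicate n 1)) := by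
  ext l
  simp only [Set.mem_range, Finset.coe_erase, Set.mem_sdiff, Finset.mem_coe,
    mem_oneTwoCompositions, Set.mem_singleton_iff]
  constructor
  · rintro ⟨B, rfl⟩
    have h2 := two_mem_blocks (isLeaf_eq_false hn B)
    rw [two_mem_iff_ne_replicate_one (blocks_mem B), sum_blocks] at h2
    exact ⟨⟨blocks_mem B, sum_blocks B⟩, h2⟩
  · rintro ⟨⟨hl, hsum⟩, hne⟩
    rw [← hsum] at hne
    obtain ⟨k, C, -, rfl⟩ := exists_blocks_eq hl ((two_mem_iff_ne_replicate_one hl).2 hne)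
    obtain rfl : k = n := by rw [← hsum, sum_blocks]
    exact ⟨C, rfl⟩

end Bracketing

/-- Paper's Proposition 5.6: for operation 79 on the three-element set
(`1∘1 = 2∘2 = 1`, all other products `0`), `s(n) = F_{n+1} - 1` for `n ≥ 2`. -/
theorem stmt15 (n : ℕ) (hn : 2 ≤ n) :
    assocSpectrum (fun x y : Fin 3 => if x = y ∧ x ≠ 0 then 1 else 0) n
      = Nat.fib (n + 1) - 1 := by
  calc assocSpectrum op79 n
      = Nat.card (Set.range (Bracketing.eval op79 : Bracketing n → _)) :=
        Nat.card_congr (Equiv.subtypeEquivRight fun f => by simp [eq_comm])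
    _ = Nat.card (Set.range (Bracketing.blocks : Bracketing n → _)) :=
        card_range_eq_of_eq_iff (Bracketing.eval_op79_eq_eval_op79_iff hn)
    _ = Nat.fib (n + 1) - 1 := by
        rw [Bracketing.range_blocks hn, Finset.coe_sort_coe, Nat.card_eq_finsetCard,
          Finset.card_erase_of_mem (replicate_one_mem_oneTwoCompositions n),
          card_oneTwoCompositions]
end

section
/- For every magma (G,∘): if there is some n ≥ 3 such that all bracketings of size n induce the same n-ary regular operation on G (i.e. s_G(n) = 1), then for every m > n all bracketings of size m induce the same m-ary regular operation on G (i.e. s_G(m) = 1). (Paper's Theorem 6.1, generalizing the generalized associative law.) -/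
namespace Stmt16Aux

variable {G : Type*} (op : G → G → G)

/-- Evaluation with arguments given by a function on all of `ℕ`. -/
def evalN : {n : ℕ} → Bracketing n → (ℕ → G) → G
  | _, .leaf, f => f 0
  | _, .node (k := k) P Q, f => op (evalN P f) (evalN Q (fun i => f (k + i)))

@[simp] theorem evalN_leaf (f : ℕ → G) : evalN op .leaf f = f 0 := rfl

@[simp] theorem evalN_node {k l : ℕ} (P : Bracketing k) (Q : Bracketing l) (f : ℕ → G) :
    evalN op (.node P Q) f = op (evalN op P f) (evalN op Q (fun i => f (k + i))) := rfl

theorem Bracketing_one_le : ∀ {n : ℕ} (_ : Bracketing n), 1 ≤ n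
  | _, .leaf => le_refl 1
  | _, .node P Q => by
      have := Bracketing_one_le P; have := Bracketing_one_le Q; omega

theorem evalN_congr : ∀ {n : ℕ} (B : Bracketing n) (f g : ℕ → G),
    (∀ i < n, f i = g i) → evalN op B f = evalN op B g := by
  intro n B
  induction B with
  | leaf => intro f g hfg; exact hfg 0 (by omega)
  | node P Q IHP IHQ =>
    rename_i k l
    intro f g hfg
    simp only [evalN_node]
    rw [IHP f g (fun i hi => hfg i (by omega)),
        IHQ (fun i => f (k + i)) (fun i => g (k + i)) (fun i hi => hfg (k + i) (by omega))]

theorem eval_eq_evalN : ∀ {n : ℕ} (B : Bracketing n) (v : Fin n → G) (f : ℕ → G),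
    (∀ i : Fin n, f i = v i) → Bracketing.eval op B v = evalN op B f := by
  intro n B
  induction B with
  | leaf =>
    intro v f hf
    have := hf 0
    simpa [Bracketing.eval, evalN] using this.symm
  | node P Q IHP IHQ =>
    rename_i k l
    intro v f hf
    show op _ _ = op _ _
    rw [IHP (fun i => v (Fin.castAdd l i)) f (fun i => by simpa using hf (Fin.castAdd l i)),
        IHQ (fun i => v (Fin.natAdd k i)) (fun j => f (k + j))
          (fun i => by simpa using hf (Fin.natAdd k i))]

/-- collapse arguments `i` and `i+1` into one product argument. -/
def clps (i : ℕ) (f : ℕ → G) : ℕ → G :=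
  fun j => if j < i then f j else if j = i then op (f i) (f (i + 1)) else f (j + 1)

theorem clps_of_lt {i j : ℕ} (h : j < i) (f : ℕ → G) : clps op i f j = f j := by
  simp [clps, h]

theorem clps_self (i : ℕ) (f : ℕ → G) : clps op i f i = op (f i) (f (i + 1)) := by
  simp [clps]

theorem clps_of_gt {i j : ℕ} (h : i < j) (f : ℕ → G) : clps op i f j = f (j + 1) := by
  unfold clps
  rw [if_neg (by omega), if_neg (by omega)]

theorem eval1 : ∀ {n : ℕ} (B : Bracketing n), n = 1 → ∀ f : ℕ → G, evalN op B f = f 0 := by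
  intro n B
  induction B with
  | leaf => intro _ f; rfl
  | node P Q _ _ =>
    intro hn
    have := Bracketing_one_le P
    have := Bracketing_one_le Q
    omega

theorem collapse_ex : ∀ {n : ℕ} (B : Bracketing n), 2 ≤ n →
    ∃ (p : ℕ) (_ : n = p + 1) (B' : Bracketing p) (i : ℕ), i + 1 < n ∧
      ∀ f : ℕ → G, evalN op B f = evalN op B' (clps op i f) := by
  intro n B
  induction B with
  | leaf => intro h; omega
  | node P Q IHP IHQ =>
    rename_i k l
    intro _
    have hk1 := Bracketing_one_le P
    have hl1 := Bracketing_one_le Q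
    by_cases hk : 2 ≤ k
    · obtain ⟨p, hp, P', i, hi, hP⟩ := IHP hk
      refine ⟨p + l, by omega, .node P' Q, i, by omega, fun f => ?_⟩
      simp only [evalN_node]
      rw [hP f]
      congr 1
      apply evalN_congr
      intro j hj
      rw [clps_of_gt op (by omega)]
      exact congrArg f (by omega)
    · by_cases hl : 2 ≤ l
      · obtain ⟨p, hp, Q', i, hi, hQ⟩ := IHQ hl
        refine ⟨k + p, by omega, .node P Q', k + i, by omega, fun f => ?_⟩
        simp only [evalN_node]
        congr 1
        · exact evalN_congr op P _ _ (fun j hj => (clps_of_lt op (by omega) f).symm)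
        · rw [hQ (fun j => f (k + j))]
          apply evalN_congr
          intro j hj
          rcases lt_trichotomy j i with hji | rfl | hji
          · rw [clps_of_lt op hji, clps_of_lt op (by omega)]
          · rw [clps_self, clps_self]
            exact congrArg _ (congrArg f (by omega))
          · rw [clps_of_gt op hji, clps_of_gt op (by omega)]
            exact congrArg f (by omega)
      · -- k = 1, l = 1
        refine ⟨1, by omega, .leaf, 0, by omega, fun f => ?_⟩
        simp only [evalN_node, evalN_leaf]
        rw [eval1 op P (by omega), eval1 op Q (by omega), clps_self]
        exact congrArg _ (congrArg f (by omega))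



/-- Rotation lemma: assuming all bracketings of size `m ≥ 3` induce the same operation,
any single rotation at size `m+1` preserves the induced operation. -/
theorem rot {m : ℕ} (hm : 3 ≤ m)
    (H : ∀ p₁ p₂ : ℕ, p₁ = m → p₂ = m → ∀ (B₁ : Bracketing p₁) (B₂ : Bracketing p₂)
      (f : ℕ → G), evalN op B₁ f = evalN op B₂ f) :
    ∀ {a b c : ℕ} (A : Bracketing a) (B : Bracketing b) (C : Bracketing c),
      a + b + c = m + 1 → ∀ f : ℕ → G,
      evalN op (.node (.node A B) C) f = evalN op (.node A (.node B C)) f := by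
  intro a b c A B C hsum f
  have ha1 := Bracketing_one_le A
  have hb1 := Bracketing_one_le B
  have hc1 := Bracketing_one_le C
  by_cases ha : 2 ≤ a
  · obtain ⟨p, hp, A', i, hi, hA⟩ := collapse_ex op A ha
    have key := H (p + b + c) (p + (b + c)) (by omega) (by omega)
      (.node (.node A' B) C) (.node A' (.node B C)) (clps op i f)
    simp only [evalN_node] at key ⊢
    have eA : evalN op A' (clps op i f) = evalN op A f := (hA f).symm
    have eB : evalN op B (fun j => clps op i f (p + j)) = evalN op B (fun j => f (a + j)) :=
      evalN_congr op B _ _ (fun j hj => by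
        rw [clps_of_gt op (by omega)]; exact congrArg f (by omega))
    have eC1 : evalN op C (fun j => clps op i f (p + b + j)) =
        evalN op C (fun j => f (a + b + j)) :=
      evalN_congr op C _ _ (fun j hj => by
        rw [clps_of_gt op (by omega)]; exact congrArg f (by omega))
    have eC2 : evalN op C (fun j => clps op i f (p + (b + j))) =
        evalN op C (fun j => f (a + (b + j))) :=
      evalN_congr op C _ _ (fun j hj => by
        rw [clps_of_gt op (by omega)]; exact congrArg f (by omega))
    rw [eA, eB, eC1, eC2] at key
    exact key
  · by_cases hb : 2 ≤ b
    · obtain ⟨p, hp, B', i, hi, hB⟩ := collapse_ex op B hb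
      have key := H (a + p + c) (a + (p + c)) (by omega) (by omega)
        (.node (.node A B') C) (.node A (.node B' C)) (clps op (a + i) f)
      simp only [evalN_node] at key ⊢
      have eA : evalN op A (clps op (a + i) f) = evalN op A f :=
        evalN_congr op A _ _ (fun j hj => clps_of_lt op (by omega) f)
      have eB : evalN op B' (fun j => clps op (a + i) f (a + j)) =
          evalN op B (fun j => f (a + j)) := by
        rw [hB (fun j => f (a + j))]
        apply evalN_congr
        intro j hj
        rcases lt_trichotomy j i with hji | rfl | hji
        · rw [clps_of_lt op hji, clps_of_lt op (by omega)]
        · rw [clps_self, clps_self]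
          exact congrArg _ (congrArg f (by omega))
        · rw [clps_of_gt op hji, clps_of_gt op (by omega)]
          exact congrArg f (by omega)
      have eC1 : evalN op C (fun j => clps op (a + i) f (a + p + j)) =
          evalN op C (fun j => f (a + b + j)) :=
        evalN_congr op C _ _ (fun j hj => by
          rw [clps_of_gt op (by omega)]; exact congrArg f (by omega))
      have eC2 : evalN op C (fun j => clps op (a + i) f (a + (p + j))) =
          evalN op C (fun j => f (a + (b + j))) :=
        evalN_congr op C _ _ (fun j hj => by
          rw [clps_of_gt op (by omega)]; exact congrArg f (by omega))
      rw [eA, eB, eC1, eC2] at key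
      exact key
    · have hc : 2 ≤ c := by omega
      obtain ⟨p, hp, C', i, hi, hC⟩ := collapse_ex op C hc
      have key := H (a + b + p) (a + (b + p)) (by omega) (by omega)
        (.node (.node A B) C') (.node A (.node B C')) (clps op (a + b + i) f)
      simp only [evalN_node] at key ⊢
      have eA : evalN op A (clps op (a + b + i) f) = evalN op A f :=
        evalN_congr op A _ _ (fun j hj => clps_of_lt op (by omega) f)
      have eB1 : evalN op B (fun j => clps op (a + b + i) f (a + j)) =
          evalN op B (fun j => f (a + j)) :=
        evalN_congr op B _ _ (fun j hj => clps_of_lt op (by omega) _)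
      have eC1 : evalN op C' (fun j => clps op (a + b + i) f (a + b + j)) =
          evalN op C (fun j => f (a + b + j)) := by
        rw [hC (fun j => f (a + b + j))]
        apply evalN_congr
        intro j hj
        rcases lt_trichotomy j i with hji | rfl | hji
        · rw [clps_of_lt op hji, clps_of_lt op (by omega)]
        · rw [clps_self, clps_self]
          exact congrArg _ (congrArg f (by omega))
        · rw [clps_of_gt op hji, clps_of_gt op (by omega)]
          exact congrArg f (by omega)
      have eC2 : evalN op C' (fun j => clps op (a + b + i) f (a + (b + j))) =
          evalN op C (fun j => f (a + (b + j))) := by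
        have : evalN op C' (fun j => clps op (a + b + i) f (a + (b + j))) =
            evalN op C' (fun j => clps op (a + b + i) f (a + b + j)) :=
          evalN_congr op C' _ _ (fun j hj => congrArg _ (by omega))
        rw [this, eC1]
        exact evalN_congr op C _ _ (fun j hj => congrArg f (by omega))
      rw [eA, eB1, eC1, eC2] at key
      exact key

/-- The left comb with `p+1` leaves. -/
def LC : (p : ℕ) → Bracketing (p + 1)
  | 0 => .leaf
  | p + 1 => .node (LC p) .leaf

theorem toLC {m : ℕ} (hm : 3 ≤ m)
    (H : ∀ p₁ p₂ : ℕ, p₁ = m → p₂ = m → ∀ (B₁ : Bracketing p₁) (B₂ : Bracketing p₂)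
      (f : ℕ → G), evalN op B₁ f = evalN op B₂ f) :
    ∀ {l : ℕ} (Q : Bracketing l) {k : ℕ} (P : Bracketing k), k + l = m + 1 →
      ∀ f : ℕ → G, evalN op (.node P Q) f = evalN op (LC m) f := by
  intro l Q
  induction Q with
  | leaf =>
    intro k P hk f
    obtain ⟨m', rfl⟩ : ∃ m', m = m' + 1 := ⟨m - 1, by omega⟩
    show op (evalN op P f) _ = op (evalN op (LC m') f) _
    rw [H k (m' + 1) (by omega) rfl P (LC m') f]
    exact congrArg _ (congrArg f (by omega))
  | node Q₁ Q₂ IH₁ IH₂ =>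
    rename_i l₁ l₂
    intro k P hk f
    rw [← rot op hm H P Q₁ Q₂ (by omega) f]
    exact IH₂ (.node P Q₁) (by omega) f

theorem main_step {m : ℕ} (hm : 3 ≤ m)
    (H : ∀ p₁ p₂ : ℕ, p₁ = m → p₂ = m → ∀ (B₁ : Bracketing p₁) (B₂ : Bracketing p₂)
      (f : ℕ → G), evalN op B₁ f = evalN op B₂ f) :
    ∀ p₁ p₂ : ℕ, p₁ = m + 1 → p₂ = m + 1 → ∀ (B₁ : Bracketing p₁) (B₂ : Bracketing p₂)
      (f : ℕ → G), evalN op B₁ f = evalN op B₂ f := by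
  have lc : ∀ (p : ℕ), p = m + 1 → ∀ (B : Bracketing p) (f : ℕ → G),
      evalN op B f = evalN op (LC m) f := by
    intro p hp B f
    cases B with
    | leaf => omega
    | node P Q => exact toLC op hm H Q P (by omega) f
  intro p₁ p₂ h₁ h₂ B₁ B₂ f
  rw [lc p₁ h₁ B₁ f, lc p₂ h₂ B₂ f]

end Stmt16Aux

/-- Paper's Theorem 6.1: if all bracketings of some size `n ≥ 3` induce the same regular
operation on `G` (i.e. `s_G(n) = 1`), then the same holds for every size `m > n`. -/
theorem stmt16 {G : Type*} (op : G → G → G) (n : ℕ) (hn : 3 ≤ n)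
    (h : ∀ B₁ B₂ : Bracketing n, Bracketing.eval op B₁ = Bracketing.eval op B₂) :
    ∀ m : ℕ, n < m → ∀ B₁ B₂ : Bracketing m,
      Bracketing.eval op B₁ = Bracketing.eval op B₂ := by
  open Stmt16Aux in
  have base : ∀ p₁ p₂ : ℕ, p₁ = n → p₂ = n → ∀ (B₁ : Bracketing p₁) (B₂ : Bracketing p₂)
      (f : ℕ → G), evalN op B₁ f = evalN op B₂ f := by
    intro p₁ p₂ h₁ h₂ B₁ B₂ f
    subst h₁; subst h₂
    rw [← eval_eq_evalN op B₁ (fun i => f i) f (fun i => rfl),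
        ← eval_eq_evalN op B₂ (fun i => f i) f (fun i => rfl), h B₁ B₂]
  have main : ∀ m : ℕ, n ≤ m → ∀ p₁ p₂ : ℕ, p₁ = m → p₂ = m →
      ∀ (B₁ : Bracketing p₁) (B₂ : Bracketing p₂) (f : ℕ → G),
        evalN op B₁ f = evalN op B₂ f := by
    intro m hm
    induction m, hm using Nat.le_induction with
    | base => exact base
    | succ m hm IH => exact main_step op (le_trans hn hm) IH
  intro m hm B₁ B₂
  funext v
  have hm0 : 0 < m := by omega
  have hf : ∀ i : Fin m,
      (fun j => if hj : j < m then v ⟨j, hj⟩ else v ⟨0, hm0⟩) (i : ℕ) = v i := by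
    intro i
    simp [i.isLt]
  calc Bracketing.eval op B₁ v
      = evalN op B₁ (fun j => if hj : j < m then v ⟨j, hj⟩ else v ⟨0, hm0⟩) :=
        eval_eq_evalN op B₁ v _ hf
    _ = evalN op B₂ (fun j => if hj : j < m then v ⟨j, hj⟩ else v ⟨0, hm0⟩) :=
        main m (le_of_lt hm) m m rfl rfl B₁ B₂ _
    _ = Bracketing.eval op B₂ v := (eval_eq_evalN op B₂ v _ hf).symm
end

section
/- The binary operation on the nonnegative integers defined by a ∘ b = min(a,b) − 1 if a > 0 and b > 0, and a ∘ b = 0 otherwise (equivalently, a ∘ b = min(a,b) ∸ 1 with truncated subtraction on ℕ), is a Catalan operation: any two distinct bracketings of the same size induce distinct regular operations over it. (Paper's Proposition 6.3.) -/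
def kraftSum (l : List ℕ) : ℚ :=
  (l.map fun d => ((2 : ℚ) ^ d)⁻¹).sum

lemma kraftSum_append (l₁ l₂ : List ℕ) : kraftSum (l₁ ++ l₂) = kraftSum l₁ + kraftSum l₂ := by
  simp [kraftSum]

lemma kraftSum_map_succ (l : List ℕ) : kraftSum (l.map Nat.succ) = kraftSum l / 2 := by
  simp only [kraftSum, List.map_map]
  rw [div_eq_mul_inv, ← List.sum_map_mul_right]
  simp [Function.comp_def, pow_succ, mul_comm]

lemma kraftSum_pos {l : List ℕ} (hl : l ≠ []) : 0 < kraftSum l :=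
  List.sum_pos _ (by simp) (by simpa using hl)

lemma append_inj_of_kraftSum_eq_one {a b c d : List ℕ} (ha : kraftSum a = 1)
    (hc : kraftSum c = 1) (h : a ++ b = c ++ d) : a = c ∧ b = d := by
  rcases List.append_eq_append_iff.mp h with ⟨e, rfl, rfl⟩ | ⟨e, rfl, rfl⟩
  all_goals
    obtain rfl : e = [] := by
      by_contra he
      have := kraftSum_pos he
      simp only [kraftSum_append] at ha hc
      linarith
    simp

namespace Bracketing

lemma depth_castAdd {k l : ℕ} (P : Bracketing k) (Q : Bracketing l) (i : Fin k) :
    depth (node P Q) (Fin.castAdd l i) = depth P i + 1 := by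
  simp [depth]

lemma depth_natAdd {k l : ℕ} (P : Bracketing k) (Q : Bracketing l) (i : Fin l) :
    depth (node P Q) (Fin.natAdd k i) = depth Q i + 1 := by
  simp [depth]

lemma ofFn_depth_node {k l : ℕ} (P : Bracketing k) (Q : Bracketing l) :
    List.ofFn (node P Q).depth = (List.ofFn P.depth ++ List.ofFn Q.depth).map Nat.succ := by
  simp only [List.ofFn_add, List.map_append, List.map_ofFn, Function.comp_def, depth_natAdd]
  congr 2
  funext i
  exact depth_castAdd P Q i

lemma kraftSum_ofFn_depth : ∀ {n : ℕ} (B : Bracketing n), kraftSum (List.ofFn B.depth) = 1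
  | _, .leaf => by simp [kraftSum, depth]
  | _, .node P Q => by
    rw [ofFn_depth_node, kraftSum_map_succ, kraftSum_append, kraftSum_ofFn_depth P,
      kraftSum_ofFn_depth Q]
    norm_num

lemma sigma_eq_of_ofFn_depth_eq : ∀ {n m : ℕ} (B : Bracketing n) (C : Bracketing m),
    List.ofFn B.depth = List.ofFn C.depth → (⟨n, B⟩ : Σ n, Bracketing n) = ⟨m, C⟩
  | _, _, .leaf, .leaf, _ => rfl
  | _, _, .leaf, .node P Q, h => by
    have h0 : 0 ∈ List.ofFn leaf.depth := by simp [depth]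
    rw [h, ofFn_depth_node] at h0
    simp at h0
  | _, _, .node P Q, .leaf, h => by
    have h0 : 0 ∈ List.ofFn leaf.depth := by simp [depth]
    rw [← h, ofFn_depth_node] at h0
    simp at h0
  | _, _, .node P Q, .node P' Q', h => by
    rw [ofFn_depth_node, ofFn_depth_node, List.map_inj_right Nat.succ_injective] at h
    obtain ⟨hP, hQ⟩ := append_inj_of_kraftSum_eq_one (kraftSum_ofFn_depth P)
      (kraftSum_ofFn_depth P') h
    cases sigma_eq_of_ofFn_depth_eq P P' hP
    cases sigma_eq_of_ofFn_depth_eq Q Q' hQ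
    rfl

lemma eq_of_depth_eq {n : ℕ} {B C : Bracketing n} (h : B.depth = C.depth) : B = C :=
  eq_of_heq (Sigma.mk.inj_iff.mp (sigma_eq_of_ofFn_depth_eq B C (by rw [h]))).2

lemma le_eval_min_sub_one_iff : ∀ {n : ℕ} (B : Bracketing n) (v : Fin n → ℕ) (c : ℕ),
    c ≤ B.eval (fun a b : ℕ => min a b - 1) v ↔ ∀ i, c ≤ v i - B.depth i
  | _, .leaf, v, c => by simp [eval, depth, Fin.forall_fin_one]
  | _, .node _ _, _, 0 => by simp
  | _, .node P Q, v, c + 1 => by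
    have shift : ∀ x d : ℕ, c + 1 ≤ x - (d + 1) ↔ c + 2 ≤ x - d := by omega
    simp only [eval, Fin.forall_fin_add, depth_castAdd, depth_natAdd, shift,
      ← le_eval_min_sub_one_iff P, ← le_eval_min_sub_one_iff Q]
    omega

lemma depth_le_of_eval_eq {n : ℕ} {B C : Bracketing n}
    (h : B.eval (fun a b : ℕ => min a b - 1) = C.eval (fun a b : ℕ => min a b - 1)) (i : Fin n) :
    C.depth i ≤ B.depth i := by
  have hB : 1 ≤ B.eval (fun a b : ℕ => min a b - 1) (fun j => 1 + B.depth j) :=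
    (le_eval_min_sub_one_iff B _ 1).mpr fun j => by omega
  rw [h, le_eval_min_sub_one_iff] at hB
  have := hB i
  omega

end Bracketing

/-- Paper's Proposition 6.3: the operation `a ∘ b = min(a,b) ∸ 1` (truncated subtraction)
on the nonnegative integers is Catalan. -/
theorem stmt18 : IsCatalanOp (fun a b : ℕ => min a b - 1) := by
  intro n B C hne heval
  refine hne (Bracketing.eq_of_depth_eq (funext fun i => le_antisymm ?_ ?_))
  · exact Bracketing.depth_le_of_eval_eq heval.symm i
  · exact Bracketing.depth_le_of_eval_eq heval i
end
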